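/- Let ψ and ψ₂ be two never-vanishing C^{2,1} solutions of the Schrödinger equation ∂u/∂t = (iℏ/2m)Δu − (i/ℏ)Vu on ℝⁿ × [t₀,t₁], and set φ := ψ₂/ψ. Then φ satisfies ∂φ/∂t + v_q·∇φ − (iℏ/2m)Δφ = 0, where v_q := (ℏ/(im))∇(log ψ). -/

import Mathlib

/-!
Writing `ψ₂ = φ ψ`, the product rule gives `Δψ₂ = ψ Δφ + 2 ∇φ·∇ψ + φ Δψ`. In
`∂ₜφ = (ψ ∂ₜψ₂ - ψ₂ ∂ₜψ)/ψ²` the potential terms cancel and the Laplacians leave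
`(iℏ/2m)(Δφ + 2 ∇ψ/ψ · ∇φ)`; the cross term is exactly `-v_q·∇φ`.
-/

open Complex Set

noncomputable def pderiv' {n : ℕ} (i : Fin n) (f : (Fin n → ℝ) → ℂ) (x : Fin n → ℝ) : ℂ :=
  deriv (fun s => f (Function.update x i s)) (x i)

noncomputable def lap' {n : ℕ} (f : (Fin n → ℝ) → ℂ) (x : Fin n → ℝ) : ℂ :=
  ∑ i, pderiv' i (fun y => pderiv' i f y) x

theorem deriv_deriv_mul {𝕜 𝔸 : Type*} [NontriviallyNormedField 𝕜] [NormedCommRing 𝔸]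
    [NormedAlgebra 𝕜 𝔸] {u v : 𝕜 → 𝔸} {c : 𝕜} (hu : ContDiffAt 𝕜 2 u c)
    (hv : ContDiffAt 𝕜 2 v c) :
    deriv (deriv (u * v)) c =
      deriv (deriv u) c * v c + 2 * (deriv u c * deriv v c) + u c * deriv (deriv v) c := by
  have h := iteratedDeriv_mul hu hv
  simp only [Finset.sum_range_succ, Finset.sum_range_zero, iteratedDeriv_zero,
    iteratedDeriv_succ] at h
  norm_num at h
  linear_combination h

theorem pderiv'_pderiv'_eq_deriv_deriv {n : ℕ} (f : (Fin n → ℝ) → ℂ) (x : Fin n → ℝ)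
    (i : Fin n) :
    pderiv' i (fun y => pderiv' i f y) x =
      deriv (deriv (fun s => f (Function.update x i s))) (x i) := by
  simp only [pderiv', Function.update_idem, Function.update_self]

theorem lap'_mul {n : ℕ} {f g : (Fin n → ℝ) → ℂ} (hf : ContDiff ℝ 2 f) (hg : ContDiff ℝ 2 g)
    (x : Fin n → ℝ) :
    lap' (f * g) x =
      lap' f x * g x + 2 * ∑ i, pderiv' i f x * pderiv' i g x + f x * lap' g x := by
  simp only [lap', pderiv'_pderiv'_eq_deriv_deriv, Finset.sum_mul, Finset.mul_sum,
    ← Finset.sum_add_distrib]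
  refine Finset.sum_congr rfl fun i _ => ?_
  have hline : ∀ h : (Fin n → ℝ) → ℂ, ContDiff ℝ 2 h →
      ContDiffAt ℝ 2 (fun s => h (Function.update x i s)) (x i) :=
    fun h hh => (hh.comp (contDiff_update 2 x i)).contDiffAt
  have h := deriv_deriv_mul (hline f hf) (hline g hg)
  rwa [Function.update_eq_self] at h

theorem ratio_of_schrodinger_solutions_general
    {n : ℕ} (hbar m : ℝ)
    (V : (Fin n → ℝ) → ℝ)
    (t₀ t₁ : ℝ)
    (ψ ψ₂ : ℝ → (Fin n → ℝ) → ℂ)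
    (hψ_smooth : ContDiff ℝ 2 (fun p : ℝ × (Fin n → ℝ) => ψ p.1 p.2))
    (hψ₂_smooth : ContDiff ℝ 2 (fun p : ℝ × (Fin n → ℝ) => ψ₂ p.1 p.2))
    (hψ_nonzero : ∀ t ∈ Icc t₀ t₁, ∀ x, ψ t x ≠ 0)
    (hψ_pde : ∀ t ∈ Icc t₀ t₁, ∀ x,
      deriv (fun s => ψ s x) t =
        (I * hbar / (2 * m)) * lap' (ψ t) x - (I / hbar) * (V x : ℂ) * ψ t x)
    (hψ₂_pde : ∀ t ∈ Icc t₀ t₁, ∀ x,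
      deriv (fun s => ψ₂ s x) t =
        (I * hbar / (2 * m)) * lap' (ψ₂ t) x - (I / hbar) * (V x : ℂ) * ψ₂ t x) :
    ∀ t ∈ Icc t₀ t₁, ∀ x,
      deriv (fun s => ψ₂ s x / ψ s x) t
        + (∑ i, ((hbar : ℂ) / (I * m)) * (pderiv' i (ψ t) x / ψ t x) *
              pderiv' i (fun z => ψ₂ t z / ψ t z) x)
        - (I * hbar / (2 * m)) * lap' (fun z => ψ₂ t z / ψ t z) x = 0 := by
  intro t ht x
  set φ : (Fin n → ℝ) → ℂ := fun z => ψ₂ t z / ψ t z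
  have hψ0 := hψ_nonzero t ht
  have hψt : ContDiff ℝ 2 (ψ t) := hψ_smooth.comp (contDiff_const.prodMk contDiff_id)
  have hψ₂t : ContDiff ℝ 2 (ψ₂ t) := hψ₂_smooth.comp (contDiff_const.prodMk contDiff_id)
  have hψ₂_eq : ψ₂ t = φ * ψ t := funext fun z => (div_mul_cancel₀ _ (hψ0 z)).symm
  have hφ : ContDiff ℝ 2 φ := by
    simpa only [φ, div_eq_mul_inv] using hψ₂t.mul (hψt.fun_inv hψ0)
  have hlap := lap'_mul hφ hψt x
  rw [← hψ₂_eq] at hlap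
  have htime : deriv (fun s => ψ₂ s x / ψ s x) t =
      (deriv (fun s => ψ₂ s x) t * ψ t x - ψ₂ t x * deriv (fun s => ψ s x) t) / ψ t x ^ 2 :=
    deriv_fun_div
      ((hψ₂_smooth.comp (contDiff_id.prodMk contDiff_const)).differentiable two_ne_zero t)
      ((hψ_smooth.comp (contDiff_id.prodMk contDiff_const)).differentiable two_ne_zero t)
      (hψ0 x)
  have hdrift : ∑ i, ((hbar : ℂ) / (I * m)) * (pderiv' i (ψ t) x / ψ t x) * pderiv' i φ x =
      -(I * hbar / m) / ψ t x * ∑ i, pderiv' i φ x * pderiv' i (ψ t) x := by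
    rw [Finset.mul_sum]
    refine Finset.sum_congr rfl fun i _ => ?_
    rw [div_mul_eq_div_div, div_I]
    ring
  rw [htime, hdrift, hψ₂_pde t ht, hψ_pde t ht, hlap]
  simp only [φ]
  field_simp [hψ0 x]
  ring

/-- the ratio `φ = ψ₂/ψ` of two never-vanishing solutions of the
Schrödinger equation satisfies `∂φ/∂t + v_q·∇φ − (iℏ/2m)Δφ = 0`, where
`v_q = (ℏ/(im))∇(log ψ) = (ℏ/(im)) ∇ψ/ψ`. -/
theorem ratio_of_schrodinger_solutions
    {n : ℕ} (hbar m : ℝ) (hhbar : 0 < hbar) (hm : 0 < m)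
    (V : (Fin n → ℝ) → ℝ) (hV : Measurable V)
    (t₀ t₁ : ℝ) (ht : t₀ ≤ t₁)
    (ψ ψ₂ : ℝ → (Fin n → ℝ) → ℂ)
    (hψ_smooth : ContDiff ℝ 2 (fun p : ℝ × (Fin n → ℝ) => ψ p.1 p.2))
    (hψ₂_smooth : ContDiff ℝ 2 (fun p : ℝ × (Fin n → ℝ) => ψ₂ p.1 p.2))
    (hψ_nonzero : ∀ t ∈ Icc t₀ t₁, ∀ x, ψ t x ≠ 0)
    (hψ₂_nonzero : ∀ t ∈ Icc t₀ t₁, ∀ x, ψ₂ t x ≠ 0)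
    (hψ_pde : ∀ t ∈ Icc t₀ t₁, ∀ x,
      deriv (fun s => ψ s x) t =
        (I * hbar / (2 * m)) * lap' (ψ t) x - (I / hbar) * (V x : ℂ) * ψ t x)
    (hψ₂_pde : ∀ t ∈ Icc t₀ t₁, ∀ x,
      deriv (fun s => ψ₂ s x) t =
        (I * hbar / (2 * m)) * lap' (ψ₂ t) x - (I / hbar) * (V x : ℂ) * ψ₂ t x) :
    ∀ t ∈ Icc t₀ t₁, ∀ x,
      deriv (fun s => ψ₂ s x / ψ s x) t
        + (∑ i, ((hbar : ℂ) / (I * m)) * (pderiv' i (ψ t) x / ψ t x) *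
              pderiv' i (fun z => ψ₂ t z / ψ t z) x)
        - (I * hbar / (2 * m)) * lap' (fun z => ψ₂ t z / ψ t z) x = 0 :=
  ratio_of_schrodinger_solutions_general hbar m V t₀ t₁ ψ ψ₂ hψ_smooth hψ₂_smooth hψ_nonzero hψ_pde
    hψ₂_pde
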